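/- Define f(s) = (s² + 4·s)/(5·s + 2). The set of real solutions of the equation f(f(s)) = s (at points where both denominators are nonzero) is exactly {0, 1/2, −3 + √7, −3 − √7}. In particular, s = 1/2 is the unique solution in (0,1], f(1/2) = 1/2, and at the symmetric offer pair s1 = s2 = 1/2 with both responders choosing each proposer with probability 1/2, the expected payoffs Π_P1 = Π_P2 = Π_R1 = Π_R2 = 3/8. -/

import Mathlib

/-- The best-response offer map of the two-proposer–two-responder Ultimatum Game. -/
noncomputable def fmap (s : ℝ) : ℝ := (s^2 + 4*s) / (5*s + 2)

/-- Expected payoff of proposer 1 under the responders' evolutionarily stable strategy. -/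
noncomputable def PiP1 (s1 s2 : ℝ) : ℝ :=
  3 * s2 * (2 * s1 - s2) * (1 - s1) / (s1 + s2)^2

/-- Expected payoff of proposer 2 under the responders' evolutionarily stable strategy. -/
noncomputable def PiP2 (s1 s2 : ℝ) : ℝ :=
  3 * s1 * (2 * s2 - s1) * (1 - s2) / (s1 + s2)^2

/-- Expected payoff of a responder playing `p` against a responder playing `q`. -/
noncomputable def PiR (s1 s2 p q : ℝ) : ℝ :=
  s1 * p * (1 - q / 2) + s2 * (1 - p) * (1 + q) / 2

/-!
Clearing denominators,
`f (f s) - s = -12 s (2s - 1) (s² + 6s + 2) / ((5s + 2) (5s² + 30s + 4))`,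
and `5 f(s) + 2 = (5s² + 30s + 4) / (5s + 2)`. Since `5s² + 30s + 4 = 5 (s² + 6s + 2) - 6`,
neither denominator vanishes at a root of the numerator, so the solutions are exactly its roots
`0`, `1/2`, `-3 ± √7`. For `s > 0` the factors `s` and `s² + 6s + 2` are positive, leaving `1/2`.
-/

def twoCyclePoly (s : ℝ) : ℝ := s * (2*s - 1) * (s^2 + 6*s + 2)

lemma five_mul_fmap_add_two {s : ℝ} (hD : 5*s + 2 ≠ 0) :
    5 * fmap s + 2 = (5*s^2 + 30*s + 4) / (5*s + 2) := by
  unfold fmap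
  field_simp
  ring

lemma fmap_fmap_sub_self_mul {s : ℝ} (hD : 5*s + 2 ≠ 0) (hE : 5 * fmap s + 2 ≠ 0) :
    (fmap (fmap s) - s) * ((5*s + 2) * (5*s^2 + 30*s + 4)) = -12 * twoCyclePoly s := by
  set t := fmap s
  have ht : t * (5*s + 2) = s^2 + 4*s := div_mul_cancel₀ _ hD
  have hft : fmap t * (5*t + 2) = t^2 + 4*t := div_mul_cancel₀ _ hE
  unfold twoCyclePoly
  -- multiply `hft` by `(5s + 2)²` and use `(5t + 2)(5s + 2) = 5s² + 30s + 4`, both via `ht`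
  linear_combination (5*s + 2)^2 * hft
    + (-5 * fmap t * (5*s + 2) + t * (5*s + 2) + (s^2 + 4*s) + 4 * (5*s + 2)) * ht

lemma fmap_fmap_eq_self_iff {s : ℝ} (hD : 5*s + 2 ≠ 0) (hE : 5 * fmap s + 2 ≠ 0) :
    fmap (fmap s) = s ↔ twoCyclePoly s = 0 := by
  have hE' : 5*s^2 + 30*s + 4 ≠ 0 := by
    rw [five_mul_fmap_add_two hD] at hE
    exact (div_ne_zero_iff.mp hE).1
  rw [← sub_eq_zero, ← mul_left_inj' (mul_ne_zero hD hE'), fmap_fmap_sub_self_mul hD hE]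
  simp

lemma twoCyclePoly_eq_zero_iff {s : ℝ} :
    twoCyclePoly s = 0 ↔ s = 0 ∨ s = 1/2 ∨ s = -3 + Real.sqrt 7 ∨ s = -3 - Real.sqrt 7 := by
  have h7 : Real.sqrt 7 ^ 2 = 7 := Real.sq_sqrt (by norm_num)
  have hquad : s^2 + 6*s + 2 = (s - (-3 + Real.sqrt 7)) * (s - (-3 - Real.sqrt 7)) := by
    linear_combination h7
  have hhalf : 2*s - 1 = 2 * (s - 1/2) := by ring
  simp only [twoCyclePoly, hquad, hhalf, mul_eq_zero, sub_eq_zero, two_ne_zero, false_or, or_assoc]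

lemma denominators_ne_zero_of_twoCyclePoly_eq_zero {s : ℝ} (h : twoCyclePoly s = 0) :
    5*s + 2 ≠ 0 ∧ 5 * fmap s + 2 ≠ 0 := by
  suffices hDE : 5*s + 2 ≠ 0 ∧ 5*s^2 + 30*s + 4 ≠ 0 by
    rw [five_mul_fmap_add_two hDE.1]
    exact ⟨hDE.1, div_ne_zero hDE.2 hDE.1⟩
  rcases mul_eq_zero.mp h with h | hquad
  · rcases mul_eq_zero.mp h with rfl | h
    · norm_num
    · obtain rfl : s = 1/2 := by linarith
      norm_num
  · -- `5s² + 30s + 4 = 5 (s² + 6s + 2) - 6`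
    refine ⟨fun hD => ?_, fun hE => by linarith⟩
    obtain rfl : s = -2/5 := by linarith
    norm_num at hquad

lemma denominators_ne_zero_and_fmap_fmap_eq_self_iff (s : ℝ) :
    (5*s + 2 ≠ 0 ∧ 5 * fmap s + 2 ≠ 0 ∧ fmap (fmap s) = s) ↔ twoCyclePoly s = 0 := by
  constructor
  · rintro ⟨hD, hE, h⟩
    exact (fmap_fmap_eq_self_iff hD hE).mp h
  · intro h
    obtain ⟨hD, hE⟩ := denominators_ne_zero_of_twoCyclePoly_eq_zero h
    exact ⟨hD, hE, (fmap_fmap_eq_self_iff hD hE).mpr h⟩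

lemma eq_half_of_fmap_fmap_eq_self {s : ℝ} (hs : 0 < s) (h : fmap (fmap s) = s) : s = 1/2 := by
  have hD : 5*s + 2 ≠ 0 := by positivity
  have hE : 5 * fmap s + 2 ≠ 0 := by
    have : 0 < fmap s := by unfold fmap; positivity
    positivity
  have hP := (fmap_fmap_eq_self_iff hD hE).mp h
  rcases mul_eq_zero.mp hP with hlinear | hquad
  · rcases mul_eq_zero.mp hlinear with h0 | hhalf
    · exact absurd h0 hs.ne'
    · linarith
  · exact absurd hquad (by positivity)

theorem stmt7 :
    ({s : ℝ | 5*s + 2 ≠ 0 ∧ 5 * fmap s + 2 ≠ 0 ∧ fmap (fmap s) = s} =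
      {0, 1/2, -3 + Real.sqrt 7, -3 - Real.sqrt 7}) ∧
    (∀ s ∈ Set.Ioc (0:ℝ) 1, fmap (fmap s) = s → s = 1/2) ∧
    fmap (1/2) = 1/2 ∧
    PiP1 (1/2) (1/2) = 3/8 ∧ PiP2 (1/2) (1/2) = 3/8 ∧
    PiR (1/2) (1/2) (1/2) (1/2) = 3/8 := by
  refine ⟨?_, fun s hs => eq_half_of_fmap_fmap_eq_self hs.1, ?_, ?_, ?_, ?_⟩
  · ext s
    simp only [Set.mem_ofPred_eq, Set.mem_insert_iff, Set.mem_singleton_iff]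
    rw [denominators_ne_zero_and_fmap_fmap_eq_self_iff, twoCyclePoly_eq_zero_iff]
  all_goals norm_num [fmap, PiP1, PiP2, PiR]
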